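/- Space form property: let n ≥ 4 and let S be a nonempty finite set of vertices of G_n = (C_n)ᶜ. Let H be the subgraph of G_n induced on the intersection ⋂_{x∈S} N(x) of the neighbor sets of the vertices in S (the intersection of the corresponding unit spheres). Then the Euler characteristic of the clique complex of H lies in {0, 1, 2}; equivalently, the genus 1 - χ(H) lies in {-1, 0, 1}. -/

import Mathlib

/-- The cycle graph `C_n` on `Fin n`: `i ~ j` iff `i - j ≡ ±1 (mod n)`. -/
def cycleGraph (n : ℕ) : SimpleGraph (Fin n) where
  Adj i j := i ≠ j ∧ ((i - j : Fin n).val = 1 ∨ (j - i : Fin n).val = 1)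
  symm := by
    constructor
    intro i j h
    exact ⟨h.1.symm, h.2.symm⟩
  loopless := by
    constructor
    intro i h
    exact h.1 rfl

instance (n : ℕ) : DecidableRel (cycleGraph n).Adj :=
  fun a b => inferInstanceAs (Decidable (a ≠ b ∧ ((a - b : Fin n).val = 1 ∨ (b - a : Fin n).val = 1)))

/-- The path graph `P_n` on `Fin n`: `i ~ j` iff `|i - j| = 1`. -/
def pathGraph' (n : ℕ) : SimpleGraph (Fin n) where
  Adj i j := (i : ℕ) + 1 = (j : ℕ) ∨ (j : ℕ) + 1 = (i : ℕ)
  symm := by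
    constructor
    intro i j h
    exact h.symm
  loopless := by
    constructor
    intro i h
    rcases h with h | h <;> omega

instance (n : ℕ) : DecidableRel (pathGraph' n).Adj :=
  fun a b => inferInstanceAs (Decidable ((a : ℕ) + 1 = (b : ℕ) ∨ (b : ℕ) + 1 = (a : ℕ)))

/-- The finset of all nonempty cliques of a finite simple graph. -/
noncomputable def cliquesOf {V : Type*} [Finite V] (G : SimpleGraph V) : Finset (Finset V) := by
  classical
  letI : Fintype V := Fintype.ofFinite V
  exact Finset.univ.filter (fun s : Finset V => s.Nonempty ∧ G.IsClique (s : Set V))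

/-- The number of cliques with exactly `j` elements (the empty clique counting for `j = 0`). -/
noncomputable def cliqueCount {V : Type*} [Finite V] (G : SimpleGraph V) (j : ℕ) : ℕ := by
  classical
  letI : Fintype V := Fintype.ofFinite V
  exact (Finset.univ.filter (fun s : Finset V => G.IsClique (s : Set V) ∧ s.card = j)).card

/-- The Euler characteristic of the clique (Whitney) complex of `G`. -/
noncomputable def eulerChar {V : Type*} [Finite V] (G : SimpleGraph V) : ℤ :=
  ∑ c ∈ cliquesOf G, (-1 : ℤ) ^ (c.card + 1)

/-- The simplex generating function `f_G(t) = 1 + ∑_c t^{|c|}`. -/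
noncomputable def fgen {V : Type*} [Finite V] (G : SimpleGraph V) (t : ℝ) : ℝ :=
  1 + ∑ c ∈ cliquesOf G, t ^ c.card

/-! ### Auxiliary: independent-set alternating sums over subsets of ℕ -/

/-- A finset of naturals is "independent" if it contains no two consecutive numbers. -/
def IndepN (s : Finset ℕ) : Prop := ∀ i ∈ s, i + 1 ∉ s

instance : DecidablePred IndepN := fun _ => Finset.decidableDforallFinset

/-- Alternating sum over independent subsets of `B`. -/
noncomputable def FN (B : Finset ℕ) : ℤ :=
  ∑ s ∈ B.powerset.filter IndepN, (-1 : ℤ) ^ s.card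

lemma FN_empty : FN ∅ = 1 := by
  rw [FN]
  rw [Finset.powerset_empty]
  rw [Finset.filter_singleton]
  simp [IndepN]

lemma FN_key (B : Finset ℕ) (v : ℕ) (hv : v ∈ B) (hmax : ∀ x ∈ B, x ≤ v) :
    FN B = FN (B.erase v) - FN ((B.erase v).filter (fun x => x + 1 ≠ v)) := by
  classical
  have hsplit := Finset.sum_filter_add_sum_filter_not (B.powerset.filter IndepN)
      (fun s => v ∈ s) (fun s => (-1 : ℤ) ^ s.card)
  have h1 : (B.powerset.filter IndepN).filter (fun s => ¬ v ∈ s)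
      = (B.erase v).powerset.filter IndepN := by
    ext s
    simp only [Finset.mem_filter, Finset.mem_powerset, Finset.subset_erase]
    tauto
  have h2 : ∑ s ∈ (B.powerset.filter IndepN).filter (fun s => v ∈ s), (-1 : ℤ) ^ s.card
      = - FN ((B.erase v).filter (fun x => x + 1 ≠ v)) := by
    rw [FN, ← Finset.sum_neg_distrib]
    refine Finset.sum_bij' (fun s _ => s.erase v) (fun t _ => insert v t) ?_ ?_ ?_ ?_ ?_
    · intro s hs
      simp only [Finset.mem_filter, Finset.mem_powerset] at hs ⊢
      obtain ⟨⟨hsB, hind⟩, hvs⟩ := hs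
      refine ⟨?_, ?_⟩
      · intro x hx
        simp only [Finset.mem_erase] at hx
        simp only [Finset.mem_filter, Finset.mem_erase]
        refine ⟨⟨hx.1, hsB hx.2⟩, ?_⟩
        intro hx1
        exact hind x hx.2 (hx1 ▸ hvs)
      · intro i hi
        have := hind i (Finset.mem_of_mem_erase hi)
        intro h
        exact this (Finset.mem_of_mem_erase h)
    · intro t ht
      simp only [Finset.mem_filter, Finset.mem_powerset] at ht ⊢
      obtain ⟨htD, hind⟩ := ht
      have htB : t ⊆ B.erase v := fun x hx => (Finset.mem_filter.mp (htD hx)).1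
      refine ⟨⟨?_, ?_⟩, Finset.mem_insert_self v t⟩
      · intro x hx
        rcases Finset.mem_insert.mp hx with rfl | hx
        · exact hv
        · exact Finset.mem_of_mem_erase (htB hx)
      · intro i hi h
        rcases Finset.mem_insert.mp hi with rfl | hi
        · rcases Finset.mem_insert.mp h with h | h
          · omega
          · have := hmax _ (Finset.mem_of_mem_erase (htB h)); omega
        · rcases Finset.mem_insert.mp h with h | h
          · exact (Finset.mem_filter.mp (htD hi)).2 h
          · exact hind i hi h
    · intro s hs
      simp only [Finset.mem_filter] at hs
      exact Finset.insert_erase hs.2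
    · intro t ht
      simp only [Finset.mem_filter, Finset.mem_powerset] at ht
      have : v ∉ t := fun h => (Finset.mem_erase.mp (Finset.mem_filter.mp (ht.1 h)).1).1 rfl
      exact Finset.erase_insert this
    · intro s hs
      simp only [Finset.mem_filter] at hs
      have : (s.erase v).card + 1 = s.card := Finset.card_erase_add_one hs.2
      rw [← this, pow_succ]
      ring
  rw [FN, ← hsplit, h2, h1]
  rw [show FN (B.erase v) = ∑ s ∈ (B.erase v).powerset.filter IndepN, (-1 : ℤ) ^ s.card from rfl]
  ring

lemma FN_mem_aux : ∀ (k : ℕ) (B : Finset ℕ), B.card ≤ k → FN B ∈ ({-1, 0, 1} : Set ℤ) := by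
  intro k
  induction k with
  | zero =>
    intro B hB
    have : B = ∅ := Finset.card_eq_zero.mp (Nat.le_zero.mp hB)
    rw [this, FN_empty]
    simp
  | succ k ih =>
    intro B hB
    rcases eq_or_ne B ∅ with rfl | hne
    · rw [FN_empty]; simp
    have hBne : B.Nonempty := Finset.nonempty_iff_ne_empty.mpr hne
    set v := B.max' hBne with hv
    have hvB : v ∈ B := B.max'_mem hBne
    have hmax : ∀ x ∈ B, x ≤ v := fun x hx => B.le_max' x hx
    have hkey := FN_key B v hvB hmax
    by_cases hD : (B.erase v).filter (fun x => x + 1 ≠ v) = B.erase v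
    · rw [hkey, hD]
      simp
    · have : ∃ w ∈ B.erase v, ¬ (w + 1 ≠ v) := by
        by_contra h
        push_neg at h
        exact hD (Finset.filter_eq_self.mpr (fun x hx => h x hx))
      obtain ⟨w, hwB1, hw⟩ := this
      have hwv : w + 1 = v := by omega
      have hwmax : ∀ x ∈ B.erase v, x ≤ w := by
        intro x hx
        have h1 := Finset.mem_erase.mp hx
        have := hmax x h1.2
        omega
      have hkey2 := FN_key (B.erase v) w hwB1 hwmax
      have hDw : (B.erase v).filter (fun x => x + 1 ≠ v) = (B.erase v).erase w := by
        rw [← Finset.filter_ne' (B.erase v) w]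
        apply Finset.filter_congr
        intro x _
        constructor
        · intro h; omega
        · intro h; omega
      rw [hkey, hDw, hkey2]
      have hcard : (((B.erase v).erase w).filter (fun x => x + 1 ≠ w)).card ≤ k := by
        have h1 : (((B.erase v).erase w).filter (fun x => x + 1 ≠ w)).card ≤ ((B.erase v).erase w).card :=
          Finset.card_filter_le _ _
        have h2 : ((B.erase v).erase w).card ≤ (B.erase v).card := Finset.card_erase_le
        have h3 : (B.erase v).card + 1 = B.card := Finset.card_erase_add_one hvB
        omega
      have := ih _ hcard
      rcases this with h | h | h <;> simp only [Set.mem_insert_iff, Set.mem_singleton_iff] at h ⊢ <;> omega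

lemma FN_mem (B : Finset ℕ) : FN B ∈ ({-1, 0, 1} : Set ℤ) := FN_mem_aux B.card B le_rfl

/-! ### Auxiliary: arithmetic of the cycle graph -/

lemma fin_sub_val {n : ℕ} (a b : Fin n) : (a - b).val = (a.val + (n - b.val)) % n := by
  rw [Fin.sub_def]
  simp [Nat.add_comm]

lemma mod_helper (m k : ℕ) (h : m < 2 * k) :
    m % k = m ∨ (m % k = m - k ∧ k ≤ m) := by
  rcases Nat.lt_or_ge m k with h1 | h1
  · left; exact Nat.mod_eq_of_lt h1
  · right
    refine ⟨?_, h1⟩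
    rw [Nat.mod_eq_sub_mod h1]
    exact Nat.mod_eq_of_lt (by omega)

lemma d_range (n : ℕ) (hn : 4 ≤ n) (x v : Fin n)
    (h : ((cycleGraph n)ᶜ).Adj x v) :
    2 ≤ ((v - x : Fin n)).val ∧ ((v - x : Fin n)).val ≤ n - 2 := by
  rw [SimpleGraph.compl_adj] at h
  obtain ⟨hne, hnadj⟩ := h
  rw [cycleGraph] at hnadj
  simp only [ne_eq] at hnadj
  have hnadj' : ¬ ((x - v : Fin n).val = 1 ∨ (v - x : Fin n).val = 1) := by
    intro hor
    exact hnadj ⟨hne, hor⟩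
  push_neg at hnadj'
  have hvx := fin_sub_val v x
  have hxv := fin_sub_val x v
  have hvlt : v.val < n := v.isLt
  have hxlt : x.val < n := x.isLt
  have h1 := mod_helper (v.val + (n - x.val)) n (by omega)
  have h2 := mod_helper (x.val + (n - v.val)) n (by omega)
  have hd1 : (v - x : Fin n).val ≠ 1 := hnadj'.2
  have hd2 : (x - v : Fin n).val ≠ 1 := hnadj'.1
  have hxvne : x.val ≠ v.val := fun h => hne (Fin.ext h)
  omega

lemma d_inj (n : ℕ) (x u v : Fin n) (h : (u - x : Fin n).val = (v - x : Fin n).val) : u = v := by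
  have h1 := fin_sub_val u x
  have h2 := fin_sub_val v x
  have hul := u.isLt
  have hvl := v.isLt
  have hxl := x.isLt
  have m1 := mod_helper (u.val + (n - x.val)) n (by omega)
  have m2 := mod_helper (v.val + (n - x.val)) n (by omega)
  exact Fin.ext (by omega)

lemma cycle_adj_iff (n : ℕ) (hn : 4 ≤ n) (x u v : Fin n)
    (hu : ((cycleGraph n)ᶜ).Adj x u) (hv : ((cycleGraph n)ᶜ).Adj x v) :
    (cycleGraph n).Adj u v ↔
      ((u - x : Fin n).val = (v - x : Fin n).val + 1 ∨
       (v - x : Fin n).val = (u - x : Fin n).val + 1) := by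
  have hru := d_range n hn x u hu
  have hrv := d_range n hn x v hv
  have hul := u.isLt
  have hvl := v.isLt
  have hxl := x.isLt
  have h1 := fin_sub_val u x
  have h2 := fin_sub_val v x
  have h3 := fin_sub_val u v
  have h4 := fin_sub_val v u
  have m1 := mod_helper (u.val + (n - x.val)) n (by omega)
  have m2 := mod_helper (v.val + (n - x.val)) n (by omega)
  have m3 := mod_helper (u.val + (n - v.val)) n (by omega)
  have m4 := mod_helper (v.val + (n - u.val)) n (by omega)
  show (u ≠ v ∧ ((u - v : Fin n).val = 1 ∨ (v - u : Fin n).val = 1)) ↔ _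
  constructor
  · intro hadj
    obtain ⟨hne, hor⟩ := hadj
    have hne' : u.val ≠ v.val := fun h => hne (Fin.ext h)
    omega
  · intro hor
    refine ⟨fun h => ?_, ?_⟩
    · have : u.val = v.val := by rw [h]
      omega
    · omega

lemma mem_cliquesOf {V : Type*} [Finite V] (G : SimpleGraph V) (c : Finset V) :
    c ∈ cliquesOf G ↔ c.Nonempty ∧ G.IsClique (c : Set V) := by
  classical
  simp [cliquesOf]

/-- Space form property: the Euler characteristic of any intersection of unit spheres
in `G_n = (C_n)ᶜ` lies in `{0, 1, 2}` (equivalently, the genus `1 - χ` lies in `{-1, 0, 1}`). -/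
theorem spaceForm_property (n : ℕ) (hn : 4 ≤ n) (S : Finset (Fin n)) (hS : S.Nonempty) :
    eulerChar (((cycleGraph n)ᶜ).induce (⋂ x ∈ S, ((cycleGraph n)ᶜ).neighborSet x)) ∈
      ({0, 1, 2} : Set ℤ) := by
  classical
  set A : Set (Fin n) := ⋂ x ∈ S, ((cycleGraph n)ᶜ).neighborSet x with hAdef
  obtain ⟨x, hxS⟩ := hS
  letI : Fintype ↥A := Fintype.ofFinite _
  have hadjx : ∀ v : ↥A, ((cycleGraph n)ᶜ).Adj x ↑v := by
    intro v
    have hv : (v : Fin n) ∈ ⋂ y ∈ S, ((cycleGraph n)ᶜ).neighborSet y := v.2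
    simp only [Set.mem_iInter, SimpleGraph.mem_neighborSet] at hv
    exact hv x hxS
  set e : ↥A → ℕ := fun v => ((v : Fin n) - x).val - 2 with he
  have hrange : ∀ v : ↥A, 2 ≤ ((v : Fin n) - x).val ∧ ((v : Fin n) - x).val ≤ n - 2 :=
    fun v => d_range n hn x v (hadjx v)
  have heinj : Function.Injective e := by
    intro u v h
    have hu := hrange u
    have hv := hrange v
    have : ((u : Fin n) - x).val = ((v : Fin n) - x).val := by
      simp only [he] at h
      omega
    exact Subtype.ext (d_inj n x u v this)
  have hadj2 : ∀ u v : ↥A, (cycleGraph n).Adj ↑u ↑v ↔ (e u + 1 = e v ∨ e v + 1 = e u) := by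
    intro u v
    rw [cycle_adj_iff n hn x u v (hadjx u) (hadjx v)]
    have hu := hrange u
    have hv := hrange v
    simp only [he]
    omega
  set H := ((cycleGraph n)ᶜ).induce A with hH
  have hHadj : ∀ u v : ↥A, H.Adj u v ↔ (↑u ≠ (↑v : Fin n) ∧ ¬ (cycleGraph n).Adj ↑u ↑v) := by
    intro u v
    rw [hH]
    simp [SimpleGraph.compl_adj]
  set B : Finset ℕ := Finset.univ.image e with hB
  set φ : Finset ↥A → Finset ℕ := fun c => c.image e with hφ
  have himg : (cliquesOf H).image φ
      = B.powerset.filter (fun s => s.Nonempty ∧ IndepN s) := by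
    ext s
    simp only [Finset.mem_image, Finset.mem_filter, Finset.mem_powerset]
    constructor
    · rintro ⟨c, hc, rfl⟩
      rw [mem_cliquesOf] at hc
      obtain ⟨hcne, hclique⟩ := hc
      refine ⟨?_, ?_, ?_⟩
      · intro i hi
        obtain ⟨v, _, rfl⟩ := Finset.mem_image.mp hi
        exact Finset.mem_image.mpr ⟨v, Finset.mem_univ v, rfl⟩
      · exact hcne.image e
      · intro i hi h1
        obtain ⟨u, huc, rfl⟩ := Finset.mem_image.mp hi
        obtain ⟨v, hvc, hev⟩ := Finset.mem_image.mp h1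
        have huvne : u ≠ v := by
          intro h
          rw [h] at hev
          omega
        have hadj := hclique (Finset.mem_coe.mpr huc) (Finset.mem_coe.mpr hvc) huvne
        rw [hHadj] at hadj
        exact hadj.2 ((hadj2 u v).mpr (Or.inl hev.symm))
    · rintro ⟨hsB, hsne, hind⟩
      refine ⟨Finset.univ.filter (fun v => e v ∈ s), ?_, ?_⟩
      · rw [mem_cliquesOf]
        constructor
        · obtain ⟨i, hi⟩ := hsne
          obtain ⟨v, _, rfl⟩ := Finset.mem_image.mp (hsB hi)
          exact ⟨v, Finset.mem_filter.mpr ⟨Finset.mem_univ v, hi⟩⟩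
        · intro u hu v hv huv
          have hu' := (Finset.mem_filter.mp (Finset.mem_coe.mp hu)).2
          have hv' := (Finset.mem_filter.mp (Finset.mem_coe.mp hv)).2
          rw [hHadj]
          refine ⟨fun h => huv (Subtype.ext h), ?_⟩
          rw [hadj2]
          rintro (h | h)
          · exact hind (e u) hu' (h ▸ hv')
          · exact hind (e v) hv' (h ▸ hu')
      · ext i
        simp only [hφ, Finset.mem_image, Finset.mem_filter, Finset.mem_univ, true_and]
        constructor
        · rintro ⟨v, hv, rfl⟩
          exact hv
        · intro hi
          obtain ⟨v, _, rfl⟩ := Finset.mem_image.mp (hsB hi)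
          exact ⟨v, hi, rfl⟩
  have hsumeq : ∑ s ∈ B.powerset.filter (fun s => s.Nonempty ∧ IndepN s), (-1 : ℤ) ^ s.card
      = ∑ c ∈ cliquesOf H, (-1 : ℤ) ^ c.card := by
    rw [← himg, Finset.sum_image]
    · apply Finset.sum_congr rfl
      intro c _
      rw [hφ]
      rw [Finset.card_image_of_injective c heinj]
    · intro c _ c' _ h
      exact Finset.image_injective heinj h
  have hFNB : FN B = 1 - eulerChar H := by
    rw [FN]
    have hsplit : B.powerset.filter IndepN
        = insert ∅ (B.powerset.filter (fun s => s.Nonempty ∧ IndepN s)) := by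
      ext s
      simp only [Finset.mem_insert, Finset.mem_filter, Finset.mem_powerset]
      rcases eq_or_ne s ∅ with rfl | hne
      · simp only [true_or, iff_true]
        exact ⟨Finset.empty_subset _, fun i hi => absurd hi (Finset.notMem_empty i)⟩
      · simp only [hne, false_or]
        have : s.Nonempty := Finset.nonempty_iff_ne_empty.mpr hne
        tauto
    rw [hsplit, Finset.sum_insert (by simp)]
    rw [hsumeq, eulerChar]
    have : ∑ c ∈ cliquesOf H, (-1 : ℤ) ^ (c.card + 1)
        = ∑ c ∈ cliquesOf H, -((-1 : ℤ) ^ c.card) := by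
      apply Finset.sum_congr rfl
      intro c _
      rw [pow_succ]
      ring
    rw [this, Finset.sum_neg_distrib]
    simp
  have hmem := FN_mem B
  have hgoal : eulerChar H = 1 - FN B := by omega
  rw [hgoal]
  rcases hmem with h | h | h <;>
    simp only [Set.mem_insert_iff, Set.mem_singleton_iff] at h ⊢ <;> omega
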